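/- arXiv:1610.02439 — 2 statements merged into one kernel-verified Lean document; each statement's English description precedes it below -/
import Mathlib

section
/- Let n ≥ 2 be an integer, a = n!·2^(n²), and r = 2^(n²−n)·a. Let W' be the set of positive integers m such that either (m < r and the residue of m modulo a does not lie in {1, 2, …, 2^n}) or (m ≥ r and m is even), and let w₁ < w₂ < w₃ < … be the increasing enumeration of the set {m^n : m ∈ W'}. Then w₁ ≤ a and w_k ≤ a + ∑_{j=1}^{k−1} w_j for all k ≥ 2; that is, (w₁, w₂, …) is a Σ(a)-sequence. -/
/-!
It suffices that for every `M ∈ W'` the power `M ^ n` is at most `a` plus the `n`-th powers of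
finitely many smaller elements of `W'`: those powers are earlier terms of the enumeration.
Up to `a`, `W'` contains the whole interval `(2^n, a]`, on which `(x + 1)^n ≤ 2 x^n`, so each
power is paid for by `a` and all the powers below it. Beyond `a`, one finds at least `4^n`
elements of `W'` in `[M/4, M)`: the interval `[a/2, a)` when `M < 2a`, the interval
`(a + 2^n, 2a)` when `2a ≤ M < 4a`, and the even numbers `ia + 2j` with `u ≤ i < 2u`,
`2^n < j < a/2` and `u = ⌊M/2a⌋` when `4a ≤ M`.
-/

open Finset

theorem two_mul_le_two_pow (n : ℕ) : 2 * n ≤ 2 ^ n := by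
  rcases n with _ | m
  · simp
  · have := m.lt_two_pow_self
    rw [pow_succ]
    omega

theorem succ_pow_le_two_mul_pow {n x : ℕ} (h : 2 * n ≤ x + 1) : (x + 1) ^ n ≤ 2 * x ^ n := by
  -- Bernoulli at `-1/(x+1)`: `(x/(x+1))^n ≥ 1 - n/(x+1) ≥ 1/2`.
  have hy : (0 : ℚ) < x + 1 := by positivity
  have hq : (2 * n : ℚ) ≤ x + 1 := by exact_mod_cast h
  have hge : (-2 : ℚ) ≤ -1 / (x + 1) := by
    rw [neg_div, neg_le_neg_iff, div_le_iff₀ hy]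
    linarith [(x.cast_nonneg : (0 : ℚ) ≤ x)]
  have hbern := one_add_mul_le_pow hge n
  have hbase : (1 : ℚ) + -1 / (x + 1) = x / (x + 1) := by field_simp; ring
  have hhalf : (1 : ℚ) / 2 ≤ 1 + n * (-1 / (x + 1)) := by
    have : (n : ℚ) / (x + 1) ≤ 1 / 2 := by rw [div_le_iff₀ hy]; linarith
    linarith [show (n : ℚ) * (-1 / (x + 1)) = -(n / (x + 1)) by ring]
  rw [hbase, div_pow, le_div_iff₀ (by positivity)] at hbern
  have : ((x : ℚ) + 1) ^ n ≤ 2 * x ^ n := by nlinarith [pow_pos hy n]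
  exact_mod_cast this

theorem pow_le_add_sum_Ico_pow {n L M c : ℕ} (hL : L ^ n ≤ c) (hn : 2 * n ≤ L + 1)
    (hLM : L ≤ M) : M ^ n ≤ c + ∑ x ∈ Ico L M, x ^ n := by
  induction M, hLM using Nat.le_induction with
  | base => simpa using hL
  | succ M hLM ih =>
    rw [sum_Ico_succ_top hLM]
    have := succ_pow_le_two_mul_pow (n := n) (x := M) (by omega)
    omega

theorem pow_le_sum_pow_of_le_card {n b d M : ℕ} {S : Finset ℕ} (hb : ∀ x ∈ S, b ≤ x)
    (hcard : d ^ n ≤ #S) (hM : M ≤ d * b) : M ^ n ≤ ∑ x ∈ S, x ^ n :=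
  calc M ^ n ≤ (d * b) ^ n := Nat.pow_le_pow_left hM n
    _ = d ^ n * b ^ n := mul_pow d b n
    _ ≤ #S * b ^ n := Nat.mul_le_mul_right _ hcard
    _ ≤ ∑ x ∈ S, x ^ n := by
      simpa using card_nsmul_le_sum S (· ^ n) (b ^ n) fun x hx => Nat.pow_le_pow_left (hb x hx) n

theorem injOn_mul_add (m : ℕ) :
    Set.InjOn (fun p : ℕ × ℕ => m * p.1 + p.2) {p | p.2 < m} := by
  intro p hp q hq hpq
  have hm : 0 < m := Nat.zero_lt_of_lt hp
  have hmod := congrArg (· % m) hpq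
  have hdiv := congrArg (· / m) hpq
  simp only [Nat.mul_add_mod, Nat.mul_add_div hm] at hmod hdiv
  rw [Nat.mod_eq_of_lt hp, Nat.mod_eq_of_lt hq] at hmod
  rw [Nat.div_eq_of_lt hp, Nat.div_eq_of_lt hq] at hdiv
  exact Prod.ext (by omega) hmod

def Dominated (W : Set ℕ) (f : ℕ → ℕ) (c M : ℕ) : Prop :=
  ∃ S : Finset ℕ, (∀ x ∈ S, x ∈ W ∧ x < M) ∧ f M ≤ c + ∑ x ∈ S, f x

theorem le_add_sum_range_of_dominated {W : Set ℕ} {f w : ℕ → ℕ} {c : ℕ}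
    (hf : StrictMono f) (hw : StrictMono w) (hrange : Set.range w = {x | ∃ m ∈ W, x = f m})
    (hdom : ∀ M ∈ W, Dominated W f c M) (k : ℕ) : w k ≤ c + ∑ j ∈ range k, w j := by
  obtain ⟨M, hM, hkM⟩ : ∃ M ∈ W, w k = f M := by
    have hk : w k ∈ Set.range w := Set.mem_range_self k
    rw [hrange] at hk
    exact hk
  obtain ⟨S, hS, hle⟩ := hdom M hM
  have hsub : S.image f ⊆ (range k).image w := by
    intro y hy
    obtain ⟨x, hx, rfl⟩ := mem_image.mp hy
    obtain ⟨j, hj⟩ : f x ∈ Set.range w := by rw [hrange]; exact ⟨x, (hS x hx).1, rfl⟩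
    refine mem_image.mpr ⟨j, mem_range.mpr (hw.lt_iff_lt.mp ?_), hj⟩
    rw [hj, hkM]
    exact hf (hS x hx).2
  calc w k = f M := hkM
    _ ≤ c + ∑ x ∈ S, f x := hle
    _ = c + ∑ y ∈ S.image f, y := by rw [sum_image fun x _ y _ h => hf.injective h]
    _ ≤ c + ∑ y ∈ (range k).image w, y := by gcongr
    _ = c + ∑ j ∈ range k, w j := by rw [sum_image fun x _ y _ h => hw.injective h]

namespace SigmaSequence

def W (n a r : ℕ) : Set ℕ :=
  {m | 0 < m ∧ ((m < r ∧ ¬ (1 ≤ m % a ∧ m % a ≤ 2 ^ n)) ∨ (r ≤ m ∧ 2 ∣ m))}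

variable {n a r M : ℕ}

theorem mem_W_of_two_pow_lt_mod {m : ℕ} (hm : 2 ^ n < m % a) (hmr : m < r ∨ 2 ∣ m) :
    m ∈ W n a r := by
  have hpos : 0 < m := Nat.pos_of_ne_zero fun h => by simp [h] at hm
  rcases lt_or_ge m r with h | h
  · exact ⟨hpos, Or.inl ⟨h, by omega⟩⟩
  · exact ⟨hpos, Or.inr ⟨h, hmr.resolve_left h.not_gt⟩⟩

theorem two_pow_lt_of_mem_W (ha : 2 ^ n < a) (hr : a ≤ r) {m : ℕ} (hm : m ∈ W n a r) :
    2 ^ n < m := by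
  by_contra! hle
  obtain ⟨hpos, ⟨-, hmod⟩ | ⟨hrm, -⟩⟩ := hm
  · rw [Nat.mod_eq_of_lt (by omega)] at hmod
    omega
  · omega

theorem dominated_of_le (hn : n ≠ 0) (hL : (2 ^ n + 1) ^ n ≤ a) (hr : a ≤ r)
    (hM : M ∈ W n a r) (hMa : M ≤ a) : Dominated (W n a r) (· ^ n) a M := by
  have hna : 2 ^ n < a := by
    calc 2 ^ n < 2 ^ n + 1 := Nat.lt_succ_self _
      _ ≤ (2 ^ n + 1) ^ n := Nat.le_self_pow hn _
      _ ≤ a := hL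
  refine ⟨Ico (2 ^ n + 1) M, fun x hx => ?_, ?_⟩
  · obtain ⟨hlo, hhi⟩ := mem_Ico.mp hx
    refine ⟨mem_W_of_two_pow_lt_mod ?_ (Or.inl (by omega)), hhi⟩
    rw [Nat.mod_eq_of_lt (by omega)]
    omega
  · refine pow_le_add_sum_Ico_pow hL ?_ (two_pow_lt_of_mem_W hna hr hM)
    have := two_mul_le_two_pow n
    omega

theorem dominated_of_lt_two_mul (hn : n ≠ 0) (ha2 : 2 ∣ a) (ha : 2 * 4 ^ n ≤ a) (hr : a ≤ r)
    (haM : a < M) (hM : M < 2 * a) : Dominated (W n a r) (· ^ n) a M := by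
  obtain ⟨A, rfl⟩ := ha2
  have h24 : 2 ^ n < 4 ^ n := Nat.pow_lt_pow_left (by norm_num) hn
  refine ⟨Ico A (2 * A), fun x hx => ?_, le_add_left ?_⟩
  · obtain ⟨hlo, hhi⟩ := mem_Ico.mp hx
    refine ⟨mem_W_of_two_pow_lt_mod ?_ (Or.inl (by omega)), by omega⟩
    rw [Nat.mod_eq_of_lt hhi]
    omega
  · refine pow_le_sum_pow_of_le_card (d := 4) (fun x hx => (mem_Ico.mp hx).1) ?_ (by omega)
    rw [Nat.card_Ico]
    omega

theorem dominated_of_two_mul_le (hn : n ≠ 0) (ha : 2 * 4 ^ n ≤ a) (hr : 2 * a ≤ r)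
    (haM : 2 * a ≤ M) (hM : M < 4 * a) : Dominated (W n a r) (· ^ n) a M := by
  have h24 : 2 ^ n < 4 ^ n := Nat.pow_lt_pow_left (by norm_num) hn
  have h2 := Nat.two_pow_pos n
  refine ⟨Ioo (a + 2 ^ n) (2 * a), fun x hx => ?_, le_add_left ?_⟩
  · obtain ⟨hlo, hhi⟩ := mem_Ioo.mp hx
    refine ⟨mem_W_of_two_pow_lt_mod ?_ (Or.inl (by omega)), by omega⟩
    rw [Nat.mod_eq_sub_mod (by omega), Nat.mod_eq_of_lt (by omega)]
    omega
  · refine pow_le_sum_pow_of_le_card (d := 4) (b := a) (fun x hx => by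
      have := (mem_Ioo.mp hx).1; omega) ?_ (by omega)
    rw [Nat.card_Ioo]
    omega

theorem dominated_of_four_mul_le (hn : 2 ≤ n) (ha2 : 2 ∣ a) (ha : 2 * 4 ^ n ≤ a)
    (hM : 4 * a ≤ M) : Dominated (W n a r) (· ^ n) a M := by
  obtain ⟨A, rfl⟩ := ha2
  set u := M / (2 * (2 * A))
  have hA : 0 < A := by have := Nat.one_le_pow n 4 (by norm_num); omega
  have hu2 : 2 ≤ u := (Nat.le_div_iff_mul_le (by omega)).2 (by omega)
  have huM : u * (2 * (2 * A)) ≤ M := Nat.div_mul_le_self M _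
  have hMu : M < u * (2 * (2 * A)) + 2 * (2 * A) := Nat.lt_div_mul_add (by omega)
  let P := Ico u (2 * u) ×ˢ Ioo (2 ^ n) A
  let f : ℕ × ℕ → ℕ := fun p => 2 * (A * p.1 + p.2)
  have hfinj : Set.InjOn f P := fun p hp q hq hpq =>
    injOn_mul_add A (mem_Ioo.mp (mem_product.mp hp).2).2 (mem_Ioo.mp (mem_product.mp hq).2).2
      (Nat.eq_of_mul_eq_mul_left two_pos hpq)
  refine ⟨P.image f, fun x hx => ?_, le_add_left ?_⟩
  · obtain ⟨⟨i, j⟩, hij, rfl⟩ := mem_image.mp hx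
    obtain ⟨hi1, hi2⟩ := mem_Ico.mp (mem_product.mp hij).1
    obtain ⟨hj1, hj2⟩ := mem_Ioo.mp (mem_product.mp hij).2
    refine ⟨mem_W_of_two_pow_lt_mod ?_ (Or.inr (dvd_mul_right 2 _)), ?_⟩
    · simp only [f, Nat.mul_mod_mul_left, Nat.mul_add_mod, Nat.mod_eq_of_lt hj2]
      omega
    · have : A * (i + 1) ≤ A * (2 * u) := Nat.mul_le_mul_left _ hi2
      simp only [f]
      nlinarith
  · refine pow_le_sum_pow_of_le_card (d := 4) (b := u * (2 * A)) (fun x hx => ?_) ?_ (by nlinarith)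
    · obtain ⟨⟨i, j⟩, hij, rfl⟩ := mem_image.mp hx
      have : A * u ≤ A * i := Nat.mul_le_mul_left _ (mem_Ico.mp (mem_product.mp hij).1).1
      simp only [f]
      nlinarith
    · rw [card_image_of_injOn hfinj, card_product, Nat.card_Ico, Nat.card_Ioo]
      have h4 : 4 * 2 ^ n ≤ 4 ^ n :=
        calc 4 * 2 ^ n = 2 ^ 2 * 2 ^ n := rfl
          _ ≤ 2 ^ n * 2 ^ n := Nat.mul_le_mul_right _ (Nat.pow_le_pow_right (by norm_num) hn)
          _ = 4 ^ n := by rw [← mul_pow]; norm_num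
      have h2 := Nat.two_pow_pos n
      have : 2 * (A - 2 ^ n - 1) ≤ (2 * u - u) * (A - 2 ^ n - 1) :=
        Nat.mul_le_mul_right _ (by omega)
      omega

theorem dominated (hn : 2 ≤ n) (ha2 : 2 ∣ a) (ha : 2 * 2 ^ n ^ 2 ≤ a) (hr : 2 * a ≤ r)
    (hM : M ∈ W n a r) : Dominated (W n a r) (· ^ n) a M := by
  have h4 : 2 * 4 ^ n ≤ a :=
    calc 2 * 4 ^ n = 2 * 2 ^ (2 * n) := by rw [pow_mul]; norm_num
      _ ≤ 2 * 2 ^ n ^ 2 :=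
        Nat.mul_le_mul_left _ (Nat.pow_le_pow_right (by norm_num) (by nlinarith))
      _ ≤ a := ha
  have hL : (2 ^ n + 1) ^ n ≤ a :=
    calc (2 ^ n + 1) ^ n ≤ 2 * (2 ^ n) ^ n := succ_pow_le_two_mul_pow (by
          have := two_mul_le_two_pow n; omega)
      _ = 2 * 2 ^ n ^ 2 := by rw [← pow_mul, sq]
      _ ≤ a := ha
  rcases le_or_gt M a with hMa | haM
  · exact dominated_of_le (by omega) hL (by omega) hM hMa
  rcases lt_or_ge M (2 * a) with hM2 | hM2
  · exact dominated_of_lt_two_mul (by omega) ha2 h4 (by omega) haM hM2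
  rcases lt_or_ge M (4 * a) with hM4 | hM4
  · exact dominated_of_two_mul_le (by omega) h4 hr hM2 hM4
  · exact dominated_of_four_mul_le hn ha2 h4 hM4

end SigmaSequence

/-- With `a = n!·2^(n²)`, `r = 2^(n²-n)·a`, let `W'` consist of the positive integers `m`
such that either `m < r` and the residue of `m` mod `a` is not in `{1,…,2^n}`, or `m ≥ r`
and `m` is even. If `w` is the increasing enumeration of `{m^n : m ∈ W'}` (indexed from `0`),
then `w` is a `Σ(a)`-sequence. -/
theorem W_is_sigma_a_sequence
    (n : ℕ) (hn : 2 ≤ n) (a r : ℕ)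
    (ha : a = n.factorial * 2 ^ (n ^ 2))
    (hr : r = 2 ^ (n ^ 2 - n) * a)
    (W' : Set ℕ)
    (hW' : W' = {m | 0 < m ∧
      ((m < r ∧ ¬ (1 ≤ m % a ∧ m % a ≤ 2 ^ n)) ∨ (r ≤ m ∧ 2 ∣ m))})
    (w : ℕ → ℕ) (hwmono : StrictMono w)
    (hwrange : Set.range w = {x | ∃ m ∈ W', x = m ^ n}) :
    w 0 ≤ a ∧ ∀ k, 1 ≤ k → w k ≤ a + ∑ j ∈ Finset.range k, w j := by
  subst hW'
  have ha2 : 2 ∣ a := ha ▸ (dvd_pow_self 2 (by positivity)).mul_left _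
  have ha_ge : 2 * 2 ^ n ^ 2 ≤ a := ha ▸ Nat.mul_le_mul_right _ (Nat.factorial_le hn)
  have hexp : n ^ 2 - n ≠ 0 := by
    have : n + 1 ≤ n ^ 2 := by nlinarith
    omega
  have hr_ge : 2 * a ≤ r := hr ▸ Nat.mul_le_mul_right _ (Nat.le_self_pow hexp 2)
  have key := le_add_sum_range_of_dominated (Nat.pow_left_strictMono (by omega)) hwmono hwrange
    fun M hM => SigmaSequence.dominated hn ha2 ha_ge hr_ge hM
  exact ⟨by simpa using key 0, fun k _ => key k⟩
end

section
/- Let n ≥ 2 be an integer, a = n!·2^(n²), and r = 2^(n²−n)·a, and let T' = {m : m ≥ r, m even} (note r is even). Then for every integer t ≥ 2 there exists a positive integer c with c < (t−1)·2^(n−1)·(r + (2/3)·(t−1)·(2^(2n)−1) + 2·(t−2))^n − a such that for every j with 1 ≤ j ≤ t there is a finite nonempty set F ⊆ T' with ∑_{m∈F} m^n = c + j·a. -/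
/-!
With steps `hᵢ = 2·4^i` (`i < n`), the `n`-th mixed forward difference of `x ↦ x^n` is
`n!·∏ hᵢ = n!·2^(n²) = a` at every base point `b`. Splitting the subsets `T ⊆ {0, …, n-1}` by the
sign `(-1)^(n-|T|)` gives two families `P`, `N` of `2^(n-1)` even shifts `∑_{i ∈ T} hᵢ`, pairwise
distinct because they are base-`4` expansions, with `∑_{s ∈ P} (b+s)^n = ∑_{s ∈ N} (b+s)^n + a`.
Lay `t - 1` disjoint copies of these shifts at the bases `r + k(σ+2)`, where `σ = ∑_{i<n} hᵢ` is the
largest shift, and take the `P`-copy in the first `j - 1` blocks and the `N`-copy in the others: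
the `n`-th powers sum to `c + j·a` with `c` the sum over all `N`-copies minus `a`. Since every
`N`-shift is below `σ`, this `c` obeys the stated bound.
-/

open Finset Polynomial Nat

namespace Polynomial

variable {R : Type*} [CommRing R]

theorem coeff_taylor_of_natDegree_le {p : R[X]} {k : ℕ} (hp : p.natDegree ≤ k + 1) (c : R) :
    (taylor c p).coeff k = p.coeff k + (k + 1) * c * p.coeff (k + 1) := by
  have hd : (hasseDeriv k p).natDegree < 2 := by
    have := natDegree_hasseDeriv_le p k
    omega
  rw [taylor_coeff, eval_eq_sum_range' hd]
  simp [sum_range_succ, hasseDeriv_coeff, add_comm 1 k, Nat.choose_succ_self_right]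
  ring

theorem natDegree_taylor_sub_le {p : R[X]} {k : ℕ} (hp : p.natDegree ≤ k + 1) (c : R) :
    (taylor c p - p).natDegree ≤ k := by
  refine natDegree_le_iff_coeff_eq_zero.2 fun m hm => ?_
  rw [coeff_sub, coeff_taylor_of_natDegree_le (by omega),
    coeff_eq_zero_of_natDegree_lt (p := p) (n := m + 1) (by omega)]
  ring

theorem sum_powerset_neg_one_pow_mul_eval_add_sum {ι : Type*} [DecidableEq ι] (h : ι → R)
    (s : Finset ι) (p : R[X]) (hp : p.natDegree ≤ #s) (x : R) :
    ∑ T ∈ s.powerset, (-1) ^ (#s - #T) * p.eval (x + ∑ i ∈ T, h i) =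
      (#s)! * p.coeff #s * ∏ i ∈ s, h i := by
  induction s using Finset.induction_on generalizing p with
  | empty =>
    rw [eq_C_of_natDegree_eq_zero (Nat.le_zero.1 hp)]
    simp
  | insert i s hi ih =>
    rw [card_insert_of_notMem hi] at hp ⊢
    have hsplit :
        ∑ T ∈ (insert i s).powerset, (-1) ^ (#s + 1 - #T) * p.eval (x + ∑ j ∈ T, h j) =
          ∑ T ∈ s.powerset, (-1) ^ (#s - #T) * (taylor (h i) p - p).eval (x + ∑ j ∈ T, h j) := by
      rw [sum_powerset_insert hi, ← sum_add_distrib]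
      refine sum_congr rfl fun T hT => ?_
      have hiT := notMem_mono (mem_powerset.1 hT) hi
      rw [sum_insert hiT, card_insert_of_notMem hiT, Nat.add_sub_add_right,
        Nat.sub_add_comm (card_le_card (mem_powerset.1 hT)), eval_sub, taylor_eval,
        add_comm (h i), ← add_assoc, pow_succ]
      ring
    rw [hsplit, ih _ (natDegree_taylor_sub_le hp _), coeff_sub, coeff_taylor_of_natDegree_le hp,
      prod_insert hi, Nat.factorial_succ]
    push_cast
    ring

end Polynomial

theorem sum_powerset_neg_one_pow_mul_add_sum_pow {R ι : Type*} [CommRing R] [DecidableEq ι]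
    (h : ι → R) (s : Finset ι) (x : R) :
    ∑ T ∈ s.powerset, (-1) ^ (#s - #T) * (x + ∑ i ∈ T, h i) ^ #s = (#s)! * ∏ i ∈ s, h i := by
  simpa using sum_powerset_neg_one_pow_mul_eval_add_sum h s (X ^ #s) (natDegree_X_pow_le _) x

theorem sum_powerset_neg_one_pow_card_sub_card_of_nonempty {R ι : Type*} [CommRing R]
    [DecidableEq ι] {s : Finset ι} (hs : s.Nonempty) :
    ∑ T ∈ s.powerset, (-1 : R) ^ (#s - #T) = 0 := by
  simpa [coeff_C, hs.card_pos.ne'] using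
    sum_powerset_neg_one_pow_mul_eval_add_sum (fun _ => (0 : R)) s (C 1) (by simp) 0

theorem sum_neg_one_pow_mul_eq_sub {α R : Type*} [Ring R] (s : Finset α) (e : α → ℕ)
    (f : α → R) :
    ∑ x ∈ s, (-1) ^ e x * f x =
      ∑ x ∈ s.filter (fun x => Even (e x)), f x - ∑ x ∈ s.filter (fun x => ¬Even (e x)), f x := by
  rw [← sum_filter_add_sum_filter_not s (fun x => Even (e x)), sub_eq_add_neg,
    ← sum_neg_distrib]
  congr 1 <;> refine sum_congr rfl fun x hx => ?_ <;> have hx := (mem_filter.1 hx).2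
  · rw [hx.neg_one_pow, one_mul]
  · rw [(Nat.not_even_iff_odd.1 hx).neg_one_pow, neg_one_mul]

def spread (T : Finset ℕ) : ℕ := ∑ i ∈ T, 2 * 4 ^ i

theorem spread_injective : Function.Injective spread := by
  intro S T hST
  refine geomSum_injective (by norm_num : 2 ≤ 4) (Nat.eq_of_mul_eq_mul_left two_pos ?_)
  simpa only [spread, ← mul_sum] using hST

theorem two_dvd_spread (T : Finset ℕ) : 2 ∣ spread T :=
  dvd_sum fun _ _ => dvd_mul_right _ _

theorem spread_le_spread_range {n : ℕ} {T : Finset ℕ} (hT : T ⊆ range n) :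
    spread T ≤ spread (range n) :=
  sum_le_sum_of_subset hT

theorem spread_lt_spread_range {n : ℕ} {T : Finset ℕ} (hT : T ⊆ range n)
    (hTn : T ≠ range n) : spread T < spread (range n) := by
  obtain ⟨i, hi, hiT⟩ := exists_of_ssubset (hT.ssubset_of_ne hTn)
  exact sum_lt_sum_of_subset hT hi hiT (by positivity) fun _ _ _ => zero_le _

theorem three_mul_spread_range (n : ℕ) : 3 * spread (range n) = 2 * (4 ^ n - 1) := by
  induction n with
  | zero => simp [spread]
  | succ n ih =>
    have : 1 ≤ 4 ^ n := one_le_pow _ _ (by norm_num)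
    rw [spread, sum_range_succ, mul_add, ← spread, ih, pow_succ]
    omega

theorem mul_spread_range (u n : ℕ) :
    u * spread (range n) = 2 * u * (2 ^ (2 * n) - 1) / 3 := by
  rw [pow_mul, show (2 : ℕ) ^ 2 = 4 by rfl, mul_right_comm, ← three_mul_spread_range, mul_assoc,
    Nat.mul_div_cancel_left _ three_pos, mul_comm]

theorem prod_range_two_mul_four_pow (n : ℕ) : ∏ i ∈ range n, 2 * 4 ^ i = 2 ^ n ^ 2 := by
  induction n with
  | zero => simp
  | succ n ih =>
    rw [prod_range_succ, ih, show 2 * 4 ^ n = 2 ^ (2 * n + 1) by rw [pow_succ, pow_mul]; ring,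
      ← pow_add]
    ring_nf

def plusShifts (n : ℕ) : Finset ℕ :=
  ((range n).powerset.filter fun T => Even (n - #T)).image spread

def minusShifts (n : ℕ) : Finset ℕ :=
  ((range n).powerset.filter fun T => ¬Even (n - #T)).image spread

theorem sum_plusShifts_add_pow (n b : ℕ) :
    ∑ m ∈ plusShifts n, (b + m) ^ n = ∑ m ∈ minusShifts n, (b + m) ^ n + n ! * 2 ^ n ^ 2 := by
  have key := sum_powerset_neg_one_pow_mul_add_sum_pow (fun i => (2 * 4 ^ i : ℤ)) (range n) b
  rw [sum_neg_one_pow_mul_eq_sub, card_range] at key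
  rw [← prod_range_two_mul_four_pow, plusShifts, minusShifts, sum_image spread_injective.injOn,
    sum_image spread_injective.injOn]
  zify
  simp only [spread]
  push_cast
  linear_combination key

theorem card_minusShifts {n : ℕ} (hn : n ≠ 0) : #(minusShifts n) = 2 ^ (n - 1) := by
  have hzero : ∑ T ∈ (range n).powerset, (-1 : ℤ) ^ (n - #T) * 1 = 0 := by
    simpa using sum_powerset_neg_one_pow_card_sub_card_of_nonempty (R := ℤ)
      (nonempty_range_iff.2 hn)
  rw [sum_neg_one_pow_mul_eq_sub] at hzero
  simp only [sum_const, nsmul_one, sub_eq_zero, Nat.cast_inj] at hzero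
  have htot := card_filter_add_card_filter_not (s := (range n).powerset) (fun T => Even (n - #T))
  rw [card_powerset, card_range, ← Nat.two_pow_pred_add_two_pow_pred (pos_of_ne_zero hn)] at htot
  rw [minusShifts, card_image_of_injective _ spread_injective]
  omega

theorem exists_subset_range_spread_eq {n m : ℕ} (hm : m ∈ plusShifts n ∪ minusShifts n) :
    ∃ T ⊆ range n, spread T = m := by
  simp only [plusShifts, minusShifts, mem_union, mem_image, mem_filter, mem_powerset] at hm
  obtain ⟨T, ⟨hT, -⟩, rfl⟩ | ⟨T, ⟨hT, -⟩, rfl⟩ := hm <;> exact ⟨T, hT, rfl⟩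

theorem two_dvd_of_mem_shifts {n m : ℕ} (hm : m ∈ plusShifts n ∪ minusShifts n) : 2 ∣ m := by
  obtain ⟨T, -, rfl⟩ := exists_subset_range_spread_eq hm
  exact two_dvd_spread T

theorem le_spread_range_of_mem_shifts {n m : ℕ} (hm : m ∈ plusShifts n ∪ minusShifts n) :
    m ≤ spread (range n) := by
  obtain ⟨T, hT, rfl⟩ := exists_subset_range_spread_eq hm
  exact spread_le_spread_range hT

theorem lt_spread_range_of_mem_minusShifts {n m : ℕ} (hm : m ∈ minusShifts n) :
    m < spread (range n) := by
  obtain ⟨T, hT, rfl⟩ := mem_image.1 hm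
  rw [mem_filter, mem_powerset] at hT
  refine spread_lt_spread_range hT.1 fun hTn => hT.2 ?_
  simp [hTn]

section Blocks

variable (P N : Finset ℕ) (r w : ℕ)

def blockUnion (u i : ℕ) : Finset ℕ :=
  (range u).biUnion fun k => (if k < i then P else N).map (addLeftEmbedding (r + k * w))

variable {P N r w}

theorem mem_blockUnion {u i x : ℕ} :
    x ∈ blockUnion P N r w u i ↔
      ∃ k < u, ∃ m ∈ (if k < i then P else N), r + k * w + m = x := by
  simp [blockUnion]

theorem le_of_mem_blockUnion {u i x : ℕ} (hx : x ∈ blockUnion P N r w u i) : r ≤ x := by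
  obtain ⟨k, -, m, -, rfl⟩ := mem_blockUnion.1 hx
  omega

theorem dvd_of_mem_blockUnion {d u i x : ℕ} (hr : d ∣ r) (hw : d ∣ w)
    (hPN : ∀ m ∈ P ∪ N, d ∣ m) (hx : x ∈ blockUnion P N r w u i) : d ∣ x := by
  obtain ⟨k, -, m, hm, rfl⟩ := mem_blockUnion.1 hx
  have hm : m ∈ P ∪ N := by split_ifs at hm <;> simp [hm]
  exact dvd_add (dvd_add hr (dvd_mul_of_dvd_right hw k)) (hPN m hm)

theorem sum_blockUnion {M : Type*} [AddCommMonoid M] {f : ℕ → M} {a : M}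
    (hw : ∀ m ∈ P ∪ N, m < w) (hPN : ∀ b, ∑ m ∈ P, f (b + m) = ∑ m ∈ N, f (b + m) + a)
    {u i : ℕ} (hi : i ≤ u) :
    ∑ x ∈ blockUnion P N r w u i, f x =
      ∑ k ∈ range u, ∑ m ∈ N, f (r + k * w + m) + i • a := by
  have hlt : ∀ k, ∀ m ∈ (if k < i then P else N), m < w := fun k m hm =>
    hw m (by split_ifs at hm <;> simp [hm])
  have hdisj : (range u : Set ℕ).PairwiseDisjoint
      fun k => (if k < i then P else N).map (addLeftEmbedding (r + k * w)) := by
    intro k _ l _ hkl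
    simp only [Function.onFun, disjoint_left, mem_map, addLeftEmbedding_apply]
    rintro _ ⟨m, hm, rfl⟩ ⟨m', hm', he⟩
    have := hlt k m hm
    have := hlt l m' hm'
    rcases lt_or_gt_of_ne hkl with h | h <;> nlinarith [Nat.mul_le_mul_right w h]
  have hcount : ∑ k ∈ range u, (if k < i then a else 0) = i • a := by
    obtain ⟨d, rfl⟩ := Nat.exists_eq_add_of_le hi
    rw [sum_range_add, sum_ite_of_true fun k hk => mem_range.1 hk]
    simp
  rw [blockUnion, sum_biUnion hdisj, ← hcount, ← sum_add_distrib]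
  refine sum_congr rfl fun k _ => ?_
  split_ifs <;> simp [hPN]

theorem pow_le_sum_range_sum_pow (n : ℕ) (hN : N.Nonempty) {u : ℕ} (hu : u ≠ 0) :
    r ^ n ≤ ∑ k ∈ range u, ∑ m ∈ N, (r + k * w + m) ^ n := by
  obtain ⟨m, hm⟩ := hN
  calc r ^ n ≤ (r + 0 * w + m) ^ n := Nat.pow_le_pow_left (by omega) n
    _ ≤ ∑ m ∈ N, (r + 0 * w + m) ^ n :=
        single_le_sum (f := fun m => (r + 0 * w + m) ^ n) (fun _ _ => zero_le _) hm
    _ ≤ _ := single_le_sum (f := fun k => ∑ m ∈ N, (r + k * w + m) ^ n) (fun _ _ => zero_le _)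
      (mem_range.2 (pos_of_ne_zero hu))

theorem sum_range_sum_pow_lt {n s d u : ℕ} (hn : n ≠ 0) (hN : N.Nonempty)
    (hs : ∀ m ∈ N, m < s) (hu : u ≠ 0) :
    ∑ k ∈ range u, ∑ m ∈ N, (r + k * (s + d) + m) ^ n <
      u * #N * (r + u * s + d * (u - 1)) ^ n := by
  calc ∑ k ∈ range u, ∑ m ∈ N, (r + k * (s + d) + m) ^ n
      < ∑ k ∈ range u, ∑ m ∈ N, (r + u * s + d * (u - 1)) ^ n := by
        refine sum_lt_sum_of_nonempty (nonempty_range_iff.2 hu) fun k hk => ?_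
        refine sum_lt_sum_of_nonempty hN fun m hm => Nat.pow_lt_pow_left ?_ hn
        obtain ⟨v, rfl⟩ := Nat.exists_eq_add_of_lt (pos_of_ne_zero hu)
        have := Nat.mul_le_mul_right (s + d) (Nat.le_of_lt_succ (mem_range.1 hk))
        have := hs m hm
        rw [Nat.zero_add, Nat.add_sub_cancel]
        nlinarith
    _ = u * #N * (r + u * s + d * (u - 1)) ^ n := by simp [mul_assoc]

end Blocks

/-- With `a = n!·2^(n²)`, `r = 2^(n²-n)·a` and `T' = {m : m ≥ r, m even}`, for every `t ≥ 2`
there is a positive integer `c < (t-1)·2^(n-1)·(r + (2/3)(t-1)(2^(2n)-1) + 2(t-2))^n - a`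
such that each of `c + a, c + 2a, …, c + ta` is a sum of distinct `n`-th powers of
elements of `T'`. -/
theorem arithmetic_progression_in_P_T
    (n : ℕ) (hn : 2 ≤ n) (a r : ℕ)
    (ha : a = n.factorial * 2 ^ (n ^ 2))
    (hr : r = 2 ^ (n ^ 2 - n) * a)
    (t : ℕ) (ht : 2 ≤ t) :
    ∃ c : ℕ, 0 < c ∧
      c < (t - 1) * 2 ^ (n - 1) *
        (r + 2 * (t - 1) * (2 ^ (2 * n) - 1) / 3 + 2 * (t - 2)) ^ n - a ∧
      ∀ j, 1 ≤ j → j ≤ t →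
        ∃ F : Finset ℕ, F.Nonempty ∧ (∀ m ∈ F, r ≤ m ∧ 2 ∣ m) ∧
          ∑ m ∈ F, m ^ n = c + j * a := by
  have hn0 : n ≠ 0 := by omega
  have hsq : n ^ 2 - n ≠ 0 := Nat.sub_ne_zero_of_lt (lt_self_pow₀ (by omega) one_lt_two)
  have har : a < r := hr ▸ lt_mul_left (ha ▸ by positivity) (Nat.one_lt_two_pow hsq)
  set σ := spread (range n)
  have hN : (minusShifts n).Nonempty := card_pos.1 (by rw [card_minusShifts hn0]; positivity)
  set S := ∑ k ∈ range (t - 1), ∑ m ∈ minusShifts n, (r + k * (σ + 2) + m) ^ n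
  have haS : a < S :=
    har.trans_le <| (Nat.le_self_pow hn0 r).trans <| pow_le_sum_range_sum_pow n hN (by omega)
  set F := fun j => blockUnion (plusShifts n) (minusShifts n) r (σ + 2) (t - 1) (j - 1)
  have hsum : ∀ j, 1 ≤ j → j ≤ t → ∑ x ∈ F j, x ^ n = S - a + j * a := fun j hj1 hjt => by
    rw [sum_blockUnion (fun m hm => (le_spread_range_of_mem_shifts hm).trans_lt (by omega))
      (sum_plusShifts_add_pow n) (by omega), ← ha, smul_eq_mul, Nat.sub_one_mul]
    have := Nat.le_mul_of_pos_left a hj1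
    omega
  refine ⟨S - a, by omega, ?_, fun j hj1 hjt => ⟨F j, ?_, fun x hx => ⟨?_, ?_⟩, hsum j hj1 hjt⟩⟩
  · have hlt : S < _ := sum_range_sum_pow_lt (r := r) (d := 2) hn0 hN
      (fun _ => lt_spread_range_of_mem_minusShifts) (u := t - 1) (by omega)
    rw [card_minusShifts hn0, mul_spread_range, show t - 1 - 1 = t - 2 by omega] at hlt
    omega
  · exact nonempty_of_sum_ne_zero (by rw [hsum j hj1 hjt]; omega)
  · exact le_of_mem_blockUnion hx
  · exact dvd_of_mem_blockUnion (hr ▸ dvd_mul_of_dvd_left (dvd_pow_self 2 hsq) a)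
      (dvd_add (two_dvd_spread _) dvd_rfl) (fun _ => two_dvd_of_mem_shifts) hx
end
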